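/- arXiv:2110.13564 — 3 statements merged into one kernel-verified Lean document; each statement's English description precedes it below -/
import Mathlib

section
/- Let α ∈ ℝ and ν, μ ∈ ℂ satisfy Re μ > Re ν > -1. Then P_ν^{-μ}(tanh α) = (2^ν · e^{-αμ} · (cosh α)^{-ν} / (Γ(μ-ν) Γ(1+ν))) · ∫_0^∞ e^{-tμ} (sinh(t/2))^ν (cosh(t/2 + α))^ν dt, where all complex powers of positive reals are principal branches. -/
noncomputable def pochC (a : ℂ) (n : ℕ) : ℂ := (ascPochhammer ℂ n).eval a

/-- Ferrers function of the first kind `P_ν^μ(x)`. -/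
noncomputable def ferrersP (ν μ : ℂ) (x : ℝ) : ℂ :=
  (((1 + x) / (1 - x) : ℝ) : ℂ) ^ (μ / 2) *
    ∑' n : ℕ, pochC (-ν) n * pochC (ν + 1) n /
        (Complex.Gamma ((n : ℂ) + 1 - μ) * (n.factorial : ℂ)) *
      (((1 - x) / 2 : ℝ) : ℂ) ^ n

/-! The substitution `u = 1 - exp (-t)` turns the integral into Euler's integral
`(cosh α / 2) ^ ν * ∫₀¹ u ^ ν (1 - u) ^ (μ - ν - 1) (1 - w u) ^ ν du` with `w = (1 - tanh α) / 2`;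
what makes the integrand factor is `sinh (t/2) cosh (t/2 + α) = (cosh α / 2) (e^t - 1) (1 - w u)`.
Expanding `(1 - w u) ^ ν` in its binomial series and integrating termwise against Beta integrals
gives `Γ(ν + 1) Γ(μ - ν) ∑ (-ν)ₙ (ν + 1)ₙ wⁿ / (Γ(μ + 1 + n) n!)`, which is the series
of `P_ν^{-μ}(tanh α)`, because `(1 - tanh α) / 2 = w` and
`((1 + tanh α) / (1 - tanh α)) ^ (-μ/2) = e^{-αμ}`.
-/

open MeasureTheory Set Complex
open scoped Nat

lemma choose_mul_neg_one_pow (s : ℂ) (n : ℕ) :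
    Ring.choose s n * (-1) ^ n = pochC (-s) n / n ! := by
  rw [Ring.choose_eq_smul, pochC, ascPochhammer_eval_neg_eq_descPochhammer,
    Polynomial.descPochhammer_smeval_eq_ascPochhammer, descPochhammer_eval_eq_ascPochhammer,
    Polynomial.ascPochhammer_smeval_eq_eval, smul_eq_mul]
  ring

lemma hasSum_pochC_neg_mul_pow (s : ℂ) {z : ℂ} (hz : ‖z‖ < 1) :
    HasSum (fun n => pochC (-s) n / n ! * z ^ n) ((1 - z) ^ s) := by
  have hz' : -z ∈ Metric.eball (0 : ℂ) 1 := by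
    rw [Metric.mem_eball, edist_zero_right, enorm_neg, ← ENNReal.coe_one, enorm_lt_coe]
    exact_mod_cast hz
  have h := Complex.one_add_cpow_hasFPowerSeriesOnBall_zero (a := s) |>.hasSum hz'
  simp only [binomialSeries_apply, List.ofFn_const, List.prod_replicate, smul_eq_mul, zero_sub,
    ← sub_eq_add_neg] at h
  refine h.congr_fun fun n => ?_
  rw [← choose_mul_neg_one_pow, neg_pow z, mul_assoc]

lemma summable_norm_pochC_neg_mul_pow (s : ℂ) {r : ℝ} (hr0 : 0 ≤ r) (hr : r < 1) :
    Summable (fun n => ‖pochC (-s) n / (n ! : ℂ)‖ * r ^ n) := by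
  have h := (binomialSeries ℂ s).summable_norm_mul_pow (r := ⟨r, hr0⟩)
    (lt_of_lt_of_le (ENNReal.coe_lt_one_iff.mpr hr) binomialSeries_radius_ge_one)
  simp only [binomialSeries, FormalMultilinearSeries.ofScalars_norm] at h
  refine h.congr fun n => ?_
  rw [← choose_mul_neg_one_pow, norm_mul, norm_pow, norm_neg, norm_one, one_pow, mul_one]
  rfl

lemma integrableOn_Ioo_beta {p q : ℂ} (hp : 0 < p.re) (hq : 0 < q.re) :
    IntegrableOn (fun u : ℝ => (u : ℂ) ^ (p - 1) * (1 - (u : ℂ)) ^ (q - 1)) (Ioo 0 1) := by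
  have h := betaIntegral_convergent hp hq
  rw [intervalIntegrable_iff, uIoc_of_le zero_le_one] at h
  exact h.mono_set Ioo_subset_Ioc_self

lemma integral_Ioo_beta {p q : ℂ} (hp : 0 < p.re) (hq : 0 < q.re) :
    ∫ u in Ioo (0 : ℝ) 1, (u : ℂ) ^ (p - 1) * (1 - (u : ℂ)) ^ (q - 1) =
      Gamma p * Gamma q / Gamma (p + q) := by
  rw [Gamma_mul_Gamma_eq_betaIntegral hp hq, mul_div_cancel_left₀ _
    (Gamma_ne_zero_of_re_pos (by rw [add_re]; positivity)), betaIntegral,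
    intervalIntegral.integral_of_le zero_le_one, integral_Ioc_eq_integral_Ioo]

lemma Gamma_add_nat_eq_mul_pochC {z : ℂ} (hz : 0 < z.re) (n : ℕ) :
    Gamma (z + n) = Gamma z * pochC z n := by
  rw [pochC, ← Gamma_add_nat_div_Gamma_eq z, mul_div_cancel₀ _ (Gamma_ne_zero_of_re_pos hz)]
  rintro k rfl
  rw [neg_re, natCast_re] at hz
  linarith [k.cast_nonneg (α := ℝ)]

lemma eqOn_cpow_mul_pow (b q : ℂ) (n : ℕ) :
    EqOn (fun u : ℝ => (u : ℂ) ^ (b - 1) * (1 - (u : ℂ)) ^ q * (u : ℂ) ^ n)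
      (fun u : ℝ => (u : ℂ) ^ (b + n - 1) * (1 - (u : ℂ)) ^ q) (Ioo 0 1) := fun u hu => by
  simp only [add_sub_right_comm, cpow_add _ _ (ofReal_ne_zero.mpr hu.1.ne'), cpow_natCast]
  ring

lemma re_add_nat_pos {b : ℂ} (hb : 0 < b.re) (n : ℕ) : 0 < (b + n).re := by
  rw [add_re, natCast_re]
  positivity

lemma integrableOn_Ioo_beta_mul_pow {b c : ℂ} (hb : 0 < b.re) (hcb : 0 < (c - b).re) (n : ℕ) :
    IntegrableOn (fun u : ℝ => (u : ℂ) ^ (b - 1) * (1 - (u : ℂ)) ^ (c - b - 1) * (u : ℂ) ^ n)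
      (Ioo 0 1) :=
  (integrableOn_Ioo_beta (re_add_nat_pos hb n) hcb).congr_fun (eqOn_cpow_mul_pow _ _ _).symm
    measurableSet_Ioo

lemma integral_Ioo_beta_mul_pow {b c : ℂ} (hb : 0 < b.re) (hcb : 0 < (c - b).re) (n : ℕ) :
    ∫ u in Ioo (0 : ℝ) 1, (u : ℂ) ^ (b - 1) * (1 - (u : ℂ)) ^ (c - b - 1) * (u : ℂ) ^ n =
      Gamma b * Gamma (c - b) * pochC b n / Gamma (c + n) := by
  rw [setIntegral_congr_fun measurableSet_Ioo (eqOn_cpow_mul_pow _ _ _),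
    integral_Ioo_beta (re_add_nat_pos hb n) hcb, Gamma_add_nat_eq_mul_pochC hb,
    show b + n + (c - b) = c + n by ring]
  ring

theorem integral_Ioo_euler_eq_tsum {s b c w : ℂ} (hb : 0 < b.re) (hcb : b.re < c.re)
    (hw : ‖w‖ < 1) :
    ∫ u in Ioo (0 : ℝ) 1, (u : ℂ) ^ (b - 1) * (1 - (u : ℂ)) ^ (c - b - 1) * (1 - w * u) ^ s =
      Gamma b * Gamma (c - b) *
        ∑' n : ℕ, pochC (-s) n * pochC b n / (Gamma (c + n) * n !) * w ^ n := by
  have hcb' : 0 < (c - b).re := by rw [sub_re]; linarith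
  set g : ℝ → ℂ := fun u => (u : ℂ) ^ (b - 1) * (1 - (u : ℂ)) ^ (c - b - 1)
  set a : ℕ → ℂ := fun n => pochC (-s) n / n ! * w ^ n
  set F : ℕ → ℝ → ℂ := fun n u => a n * (g u * (u : ℂ) ^ n)
  have hF_int : ∀ n, IntegrableOn (F n) (Ioo 0 1) := fun n =>
    (integrableOn_Ioo_beta_mul_pow hb hcb' n).const_mul (a n)
  have hF_sum : ∀ u ∈ Ioo (0 : ℝ) 1, HasSum (F · u) (g u * (1 - w * u) ^ s) := fun u hu => by
    have hwu : ‖w * u‖ < 1 := by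
      rw [norm_mul, norm_real, Real.norm_of_nonneg hu.1.le]
      nlinarith [norm_nonneg w, hu.2]
    refine ((hasSum_pochC_neg_mul_pow s hwu).mul_left (g u)).congr_fun fun n => ?_
    simp only [F, a]
    ring
  have hF_norm : ∀ n, ∫ u in Ioo (0 : ℝ) 1, ‖F n u‖ ≤ ‖a n‖ * ∫ u in Ioo (0 : ℝ) 1, ‖g u‖ := by
    intro n
    rw [← integral_const_mul]
    refine setIntegral_mono_on (hF_int n).norm
      ((integrableOn_Ioo_beta hb hcb').norm.const_mul _) measurableSet_Ioo fun u hu => ?_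
    rw [norm_mul, norm_mul (g u), norm_pow, norm_real, Real.norm_of_nonneg hu.1.le]
    gcongr
    exact mul_le_of_le_one_right (norm_nonneg _) (pow_le_one₀ hu.1.le hu.2.le)
  have hsum_norm : Summable fun n => ∫ u in Ioo (0 : ℝ) 1, ‖F n u‖ := by
    refine Summable.of_nonneg_of_le (fun n => integral_nonneg fun _ => norm_nonneg _) hF_norm ?_
    refine Summable.mul_right _ ((summable_norm_pochC_neg_mul_pow s (norm_nonneg w) hw).congr
      fun n => ?_)
    simp only [a, norm_mul, norm_pow]
  have hF_integral : ∀ n, ∫ u in Ioo (0 : ℝ) 1, F n u =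
      Gamma b * Gamma (c - b) * (pochC (-s) n * pochC b n / (Gamma (c + n) * n !) * w ^ n) := by
    intro n
    rw [integral_const_mul, integral_Ioo_beta_mul_pow hb hcb' n]
    simp only [a]
    ring
  rw [← setIntegral_congr_fun measurableSet_Ioo fun u hu => (hF_sum u hu).tsum_eq,
    ← integral_tsum_of_summable_integral_norm hF_int hsum_norm, tsum_congr hF_integral,
    tsum_mul_left]

theorem integral_Ioo_eq_integral_Ioi_comp_one_sub_exp_neg {E : Type*} [NormedAddCommGroup E]
    [NormedSpace ℝ E] (f : ℝ → E) :
    ∫ u in Ioo (0 : ℝ) 1, f u = ∫ t in Ioi (0 : ℝ), Real.exp (-t) • f (1 - Real.exp (-t)) := by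
  have himage : (fun t => 1 - Real.exp (-t)) '' Ioi 0 = Ioo 0 1 := by
    ext u
    constructor
    · rintro ⟨t, ht, rfl⟩
      have : Real.exp (-t) < 1 := Real.exp_lt_one_iff.mpr (neg_lt_zero.mpr ht)
      exact ⟨by linarith, by linarith [Real.exp_pos (-t)]⟩
    · rintro ⟨hu0, hu1⟩
      refine ⟨-Real.log (1 - u), neg_pos.mpr (Real.log_neg (by linarith) (by linarith)), ?_⟩
      simp only [neg_neg, Real.exp_log (sub_pos.mpr hu1), sub_sub_cancel]
  have hderiv : ∀ t ∈ Ioi (0 : ℝ),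
      HasDerivWithinAt (fun t => 1 - Real.exp (-t)) (Real.exp (-t)) (Ioi 0) t := fun t _ => by
    simpa using ((Real.hasDerivAt_exp (-t)).comp t (hasDerivAt_neg t)).const_sub 1
      |>.hasDerivWithinAt
  have hinj : InjOn (fun t => 1 - Real.exp (-t)) (Ioi 0) := fun s _ t _ hst => by
    simpa using hst
  rw [← himage, integral_image_eq_integral_abs_deriv_smul measurableSet_Ioi hderiv hinj]
  simp_rw [abs_of_pos (Real.exp_pos _)]

lemma ofReal_exp_cpow (x : ℝ) (s : ℂ) : (Real.exp x : ℂ) ^ s = exp (x * s) := by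
  rw [cpow_def_of_ne_zero (ofReal_ne_zero.mpr (Real.exp_pos x).ne'), ← ofReal_log
    (Real.exp_pos x).le, Real.log_exp]

lemma one_add_tanh_div_one_sub_tanh (α : ℝ) :
    (1 + Real.tanh α) / (1 - Real.tanh α) = Real.exp (2 * α) := by
  have hy := Real.exp_pos α
  rw [Real.tanh_eq_sinh_div_cosh, Real.sinh_eq, Real.cosh_eq, Real.exp_neg,
    show 2 * α = α + α by ring, Real.exp_add]
  field_simp
  ring

lemma sinh_half_mul_cosh_half_add (α t : ℝ) :
    Real.sinh (t / 2) * Real.cosh (t / 2 + α) =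
      Real.cosh α / 2 * (Real.exp t * (1 - Real.exp (-t))) *
        (1 - (1 - Real.tanh α) / 2 * (1 - Real.exp (-t))) := by
  have hx := Real.exp_pos (t / 2)
  have hy := Real.exp_pos α
  have ht : Real.exp t = Real.exp (t / 2) * Real.exp (t / 2) := by
    rw [← Real.exp_add, add_halves]
  rw [Real.tanh_eq_sinh_div_cosh, Real.sinh_eq, Real.cosh_eq, Real.cosh_eq, Real.sinh_eq,
    Real.exp_neg, Real.exp_neg, Real.exp_neg, Real.exp_neg, Real.exp_add, ht]
  field_simp
  ring

lemma integral_Ioi_exp_mul_sinh_cpow_mul_cosh_cpow (α : ℝ) (ν μ : ℂ) :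
    ∫ t in Ioi (0 : ℝ), exp (-(t : ℂ) * μ) * (Real.sinh (t / 2) : ℂ) ^ ν *
        (Real.cosh (t / 2 + α) : ℂ) ^ ν =
      (Real.cosh α / 2 : ℝ) ^ ν * ∫ u in Ioo (0 : ℝ) 1, (u : ℂ) ^ ν * (1 - (u : ℂ)) ^ (μ - ν - 1) *
        (1 - ((1 - Real.tanh α) / 2 : ℝ) * (u : ℂ)) ^ ν := by
  rw [integral_Ioo_eq_integral_Ioi_comp_one_sub_exp_neg, ← integral_const_mul]
  refine setIntegral_congr_fun measurableSet_Ioi fun t (ht : 0 < t) => ?_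
  have hw0 : 0 ≤ (1 - Real.tanh α) / 2 := by linarith [Real.tanh_lt_one α]
  have hw1 : (1 - Real.tanh α) / 2 < 1 := by linarith [Real.neg_one_lt_tanh α]
  have hE1 : Real.exp (-t) < 1 := Real.exp_lt_one_iff.mpr (neg_lt_zero.mpr ht)
  set w := (1 - Real.tanh α) / 2
  set E := Real.exp (-t)
  have hwE : 0 ≤ 1 - w * (1 - E) := by nlinarith [Real.exp_pos (-t)]
  have hsinh : 0 ≤ Real.sinh (t / 2) := Real.sinh_nonneg_iff.mpr (by linarith)
  have hbase : (1 : ℂ) - ((1 - E : ℝ) : ℂ) = (E : ℂ) := by push_cast; ring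
  have hfactor : (Real.cosh α / 2 * (Real.exp t * (1 - E)) * (1 - w * (1 - E)) : ℝ) ^ ν =
      (Real.cosh α / 2 : ℝ) ^ ν * (exp (t * ν) * ((1 - E : ℝ) : ℂ) ^ ν) *
        (1 - (w : ℂ) * ((1 - E : ℝ) : ℂ)) ^ ν := by
    rw [ofReal_mul, mul_cpow_ofReal_nonneg (by positivity) hwE, ofReal_mul,
      mul_cpow_ofReal_nonneg (by positivity) (by positivity), ofReal_mul,
      mul_cpow_ofReal_nonneg (by positivity) (by linarith), ofReal_exp_cpow]
    push_cast
    ring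
  have hexp : exp (-(t : ℂ) * μ) * exp (t * ν) = (E : ℂ) * (E : ℂ) ^ (μ - ν - 1) := by
    rw [ofReal_exp_cpow, ofReal_exp, ← exp_add, ← exp_add]
    push_cast
    ring_nf
  rw [mul_assoc, ← mul_cpow_ofReal_nonneg hsinh (Real.cosh_pos _).le, ← ofReal_mul,
    sinh_half_mul_cosh_half_add, hfactor, real_smul, hbase]
  linear_combination ((Real.cosh α / 2 : ℝ) ^ ν * ((1 - E : ℝ) : ℂ) ^ ν *
    (1 - (w : ℂ) * ((1 - E : ℝ) : ℂ)) ^ ν) * hexp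

theorem stmt0 (α : ℝ) (ν μ : ℂ) (hν : -1 < ν.re) (hμν : ν.re < μ.re) :
    ferrersP ν (-μ) (Real.tanh α) =
      (2 : ℂ) ^ ν * Complex.exp (-(α : ℂ) * μ) * ((Real.cosh α : ℝ) : ℂ) ^ (-ν) /
          (Complex.Gamma (μ - ν) * Complex.Gamma (1 + ν)) *
        ∫ t in Set.Ioi (0 : ℝ),
          Complex.exp (-(t : ℂ) * μ) * ((Real.sinh (t / 2) : ℝ) : ℂ) ^ ν *
            ((Real.cosh (t / 2 + α) : ℝ) : ℂ) ^ ν := by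
  have hw : ‖(((1 - Real.tanh α) / 2 : ℝ) : ℂ)‖ < 1 := by
    rw [norm_real, Real.norm_eq_abs, abs_lt]
    constructor <;> linarith [Real.tanh_lt_one α, Real.neg_one_lt_tanh α]
  have heuler := integral_Ioo_euler_eq_tsum (s := ν) (b := ν + 1) (c := μ + 1)
    (by rw [add_re, one_re]; linarith) (by simp only [add_re, one_re]; linarith) hw
  simp only [add_sub_cancel_right, add_sub_add_right_eq_sub] at heuler
  have hΓ₁ : Gamma (μ - ν) ≠ 0 := Gamma_ne_zero_of_re_pos (by rw [sub_re]; linarith)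
  have hΓ₂ : Gamma (1 + ν) ≠ 0 := Gamma_ne_zero_of_re_pos (by rw [add_re, one_re]; linarith)
  have hcosh : ((Real.cosh α : ℝ) : ℂ) ^ ν ≠ 0 := by
    rw [Ne, cpow_eq_zero_iff, not_and_or]
    exact Or.inl (ofReal_ne_zero.mpr (Real.cosh_pos α).ne')
  have h2 : (2 : ℂ) ^ ν ≠ 0 := by simp [cpow_eq_zero_iff]
  have hexp : exp ((2 * α : ℝ) * (-μ / 2)) = exp (-(α : ℂ) * μ) := by
    push_cast
    ring_nf
  have hC : ((Real.cosh α / 2 : ℝ) : ℂ) ^ ν = (Real.cosh α : ℂ) ^ ν / 2 ^ ν := by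
    rw [ofReal_div, div_cpow_ofReal_nonneg (Real.cosh_pos α).le zero_le_two, ofReal_ofNat]
  rw [integral_Ioi_exp_mul_sinh_cpow_mul_cosh_cpow, heuler, ferrersP,
    one_add_tanh_div_one_sub_tanh, ofReal_exp_cpow, hexp, hC, cpow_neg, add_comm ν 1]
  simp_rw [show ∀ n : ℕ, (n : ℂ) + 1 - -μ = μ + 1 + n from fun n => by ring]
  field_simp
end

section
/- Let α ∈ ℝ and ν, μ, λ ∈ ℂ satisfy Re μ > -1 and Re λ > -1. Then the fractional-type integral relation P_ν^{-μ-λ-1}(tanh α) · (cosh α)^{-μ-λ-1} = (1/Γ(λ+1)) · ∫_α^∞ (cosh s)^{-μ-2} · P_ν^{-μ}(tanh s) · (tanh s - tanh α)^λ ds holds, with principal complex powers of positive reals. -/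
/-! With `x = tanh α`, the factor `((1 + x)/(1 - x))^(-m/2)` in `P_ν^{-m}(x)` combines with
`(cosh α)^(-m)` into `(1 - x)^m`, because `1 ± tanh s = e^{±s} / cosh s`; what remains is the
regularized hypergeometric function `F(-ν, ν + 1; m + 1; (1 - x)/2)`. The substitution
`t = tanh s`, `dt = (cosh s)⁻² ds`, turns the right-hand side into
`∫_x^1 (1 - t)^μ F(…; μ + 1; (1 - t)/2) (t - x)^λ dt / Γ(λ + 1)`. Integrating the series
termwise, the `n`-th term is a Beta integral
`∫_x^1 (1 - t)^(μ+n) (t - x)^λ dt = (1 - x)^(μ+n+λ+1) Γ(μ+n+1) Γ(λ+1) / Γ(μ+n+λ+2)`,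
which trades `Γ(μ+n+1)` in the coefficient for `Γ(μ+λ+2+n)`: this is the left-hand side.
The interchange is justified because `F` has radius of convergence at least `1` and
`0 ≤ (1 - x)/2 < 1`. -/

open MeasureTheory Set
open Complex (Gamma regularizedGaussHGFun regularizedGaussHGFunSeries)

namespace Complex

lemma regularizedGaussHGFun_eq_tsum (a b c z : ℂ) :
    regularizedGaussHGFun a b c z =
      ∑' n, (regularizedGaussHGFunSeries a b c).coeff n * z ^ n := by
  simp [regularizedGaussHGFun, FormalMultilinearSeries.sum, mul_comm]

lemma summable_norm_coeff_regularizedGaussHGFunSeries_mul_pow (a b c : ℂ) {r : ℝ}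
    (hr₀ : 0 ≤ r) (hr : r < 1) :
    Summable fun n ↦ ‖(regularizedGaussHGFunSeries a b c).coeff n‖ * r ^ n := by
  have := (regularizedGaussHGFunSeries a b c).summable_norm_mul_pow (r := ⟨r, hr₀⟩)
    ((ENNReal.coe_lt_one_iff.2 hr).trans_le (radius_regularizedGaussHGFunSeries_ge_one a b c))
  simp only [FormalMultilinearSeries.norm_apply_eq_norm_coef] at this
  exact this

lemma ofReal_cpow_eq_exp_log {a : ℝ} (ha : 0 < a) (c : ℂ) :
    ((a : ℝ) : ℂ) ^ c = exp (Real.log a * c) := by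
  rw [cpow_def_of_ne_zero (ofReal_ne_zero.2 ha.ne'), ofReal_log ha.le]

end Complex

lemma ferrersP_neg_eq (ν m : ℂ) (t : ℝ) :
    ferrersP ν (-m) t = (((1 + t) / (1 - t) : ℝ) : ℂ) ^ (-m / 2) *
      regularizedGaussHGFun (-ν) (ν + 1) (m + 1) (((1 - t) / 2 : ℝ) : ℂ) := by
  rw [ferrersP, Complex.regularizedGaussHGFun_eq_tsum]
  congr 2 with n
  rw [Complex.coeff_regularizedGaussHGFunSeries, pochC, pochC, mul_comm (Gamma _)]
  congr 4
  ring

namespace Real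

lemma tanh_strictMono : StrictMono tanh := fun a b hab ↦ by
  by_contra! h
  have := artanh_le_artanh (neg_one_lt_tanh b) (tanh_lt_one a) h
  rw [artanh_tanh, artanh_tanh] at this
  exact hab.not_ge this

lemma tanh_image_Ioi (α : ℝ) : tanh '' Ioi α = Ioo (tanh α) 1 := by
  refine Subset.antisymm (image_subset_iff.2 fun s hs ↦ ⟨tanh_strictMono hs, tanh_lt_one s⟩)
    fun y ⟨hαy, hy1⟩ ↦ ?_
  have hy : y ∈ Ioo (-1) 1 := ⟨(neg_one_lt_tanh α).trans hαy, hy1⟩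
  refine ⟨artanh y, ?_, tanh_artanh hy⟩
  simpa [artanh_tanh] using artanh_lt_artanh (neg_one_lt_tanh α) hy1 hαy

lemma one_sub_tanh_sq (s : ℝ) : 1 - tanh s ^ 2 = (cosh s ^ 2)⁻¹ := by
  have := cosh_sq_sub_sinh_sq s
  rw [tanh_eq_sinh_div_cosh]
  field_simp [(cosh_pos s).ne']
  linarith

lemma hasDerivAt_tanh (s : ℝ) : HasDerivAt tanh (1 - tanh s ^ 2) s := by
  have := (hasDerivAt_sinh s).div (hasDerivAt_cosh s) (cosh_pos s).ne'
  rw [show sinh / cosh = tanh from funext fun x ↦ (tanh_eq_sinh_div_cosh x).symm] at this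
  refine this.congr_deriv ?_
  rw [one_sub_tanh_sq, ← sq, ← sq, cosh_sq_sub_sinh_sq, one_div]

lemma integral_comp_tanh_Ioi (α : ℝ) (g : ℝ → ℂ) :
    ∫ s in Ioi α, (1 - tanh s ^ 2) • g (tanh s) = ∫ t in Ioo (tanh α) 1, g t := by
  rw [← tanh_image_Ioi, integral_image_eq_integral_abs_deriv_smul measurableSet_Ioi
    (fun s _ ↦ (hasDerivAt_tanh s).hasDerivWithinAt) tanh_strictMono.injective.injOn]
  simp_rw [abs_of_pos (sub_pos.2 (tanh_sq_lt_one _))]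

lemma one_add_tanh (s : ℝ) : 1 + tanh s = exp s / cosh s := by
  rw [tanh_eq_sinh_div_cosh, cosh_eq, sinh_eq]
  field_simp
  ring

lemma one_sub_tanh (s : ℝ) : 1 - tanh s = exp (-s) / cosh s := by
  rw [tanh_eq_sinh_div_cosh, cosh_eq, sinh_eq]
  field_simp
  ring

lemma cosh_cpow_sub_two (s : ℝ) (w : ℂ) :
    ((cosh s : ℝ) : ℂ) ^ (w - 2) = ((1 - tanh s ^ 2 : ℝ) : ℂ) * ((cosh s : ℝ) : ℂ) ^ w := by
  rw [Complex.cpow_sub _ _ (Complex.ofReal_ne_zero.2 (cosh_pos s).ne'), Complex.cpow_two,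
    one_sub_tanh_sq]
  push_cast
  ring

end Real

open Real in
lemma ferrersP_neg_tanh_mul_cosh_cpow (ν m : ℂ) (s : ℝ) :
    ferrersP ν (-m) (tanh s) * ((cosh s : ℝ) : ℂ) ^ (-m) =
      ((1 - tanh s : ℝ) : ℂ) ^ m *
        regularizedGaussHGFun (-ν) (ν + 1) (m + 1) (((1 - tanh s) / 2 : ℝ) : ℂ) := by
  have hc := cosh_pos s
  have hratio : (1 + tanh s) / (1 - tanh s) = exp (2 * s) := by
    rw [one_add_tanh, one_sub_tanh, div_div_div_cancel_right₀ hc.ne', ← exp_sub]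
    congr 1
    ring
  rw [ferrersP_neg_eq, mul_right_comm, hratio, Complex.ofReal_cpow_eq_exp_log (exp_pos _),
    Complex.ofReal_cpow_eq_exp_log hc, ← Complex.exp_add, one_sub_tanh,
    Complex.ofReal_cpow_eq_exp_log (div_pos (exp_pos _) hc), log_exp,
    log_div (exp_pos _).ne' hc.ne', log_exp]
  congr 2
  push_cast
  ring

section Beta

variable {p q : ℂ} {x y : ℝ}

/-- The exponents are written as in `Complex.betaIntegral`. -/
lemma sub_cpow_mul_sub_cpow_comp_affine (hxy : x < y) {u : ℝ} (hu : u ∈ Ioo 0 1) :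
    |y - x| • (((y - ((y - x) * u + x) : ℝ) : ℂ) ^ p * ((((y - x) * u + x) - x : ℝ) : ℂ) ^ q) =
      ((y - x : ℝ) : ℂ) ^ (p + q + 1) * ((u : ℂ) ^ (q + 1 - 1) * (1 - (u : ℂ)) ^ (p + 1 - 1)) := by
  have hyx : 0 < y - x := sub_pos.2 hxy
  have hyxC : ((y - x : ℝ) : ℂ) ≠ 0 := Complex.ofReal_ne_zero.2 hyx.ne'
  rw [show y - ((y - x) * u + x) = (y - x) * (1 - u) by ring,
    show (y - x) * u + x - x = (y - x) * u by ring, Complex.ofReal_mul, Complex.ofReal_mul,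
    Complex.mul_cpow_ofReal_nonneg hyx.le (sub_pos.2 hu.2).le,
    Complex.mul_cpow_ofReal_nonneg hyx.le hu.1.le, Complex.cpow_add _ _ hyxC,
    Complex.cpow_add _ _ hyxC, Complex.cpow_one, abs_of_pos hyx, Complex.real_smul,
    add_sub_cancel_right, add_sub_cancel_right]
  push_cast
  ring

lemma integrableOn_sub_cpow_mul_sub_cpow (hp : -1 < p.re) (hq : -1 < q.re) (hxy : x < y) :
    IntegrableOn (fun t : ℝ ↦ ((y - t : ℝ) : ℂ) ^ p * ((t - x : ℝ) : ℂ) ^ q) (Ioo x y) := by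
  have hyx : 0 < y - x := sub_pos.2 hxy
  have key := integrableOn_image_iff_integrableOn_abs_deriv_smul
    (measurableSet_Ioo (a := (0 : ℝ)) (b := 1))
    (fun u _ ↦ (((hasDerivAt_id' u).const_mul (y - x)).add_const x).hasDerivWithinAt)
    (((strictMono_id.const_mul hyx).add_const x).injective.injOn)
    (fun t : ℝ ↦ ((y - t : ℝ) : ℂ) ^ p * ((t - x : ℝ) : ℂ) ^ q)
  simp only [mul_one, image_affine_Ioo hyx, mul_zero, zero_add, sub_add_cancel] at key
  have hbeta : IntegrableOn
      (fun u : ℝ ↦ (u : ℂ) ^ (q + 1 - 1) * (1 - (u : ℂ)) ^ (p + 1 - 1)) (Ioo 0 1) := by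
    rw [← integrableOn_Ioc_iff_integrableOn_Ioo,
      ← intervalIntegrable_iff_integrableOn_Ioc_of_le zero_le_one]
    exact Complex.betaIntegral_convergent (by simp; linarith) (by simp; linarith)
  exact key.2 (IntegrableOn.congr_fun (hbeta.const_mul _)
    (fun u hu ↦ (sub_cpow_mul_sub_cpow_comp_affine hxy hu).symm) measurableSet_Ioo)

lemma integral_sub_cpow_mul_sub_cpow (hp : -1 < p.re) (hq : -1 < q.re) (hxy : x < y) :
    ∫ t in Ioo x y, ((y - t : ℝ) : ℂ) ^ p * ((t - x : ℝ) : ℂ) ^ q =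
      ((y - x : ℝ) : ℂ) ^ (p + q + 1) * (Gamma (p + 1) * Gamma (q + 1) / Gamma (p + q + 2)) := by
  have hyx : 0 < y - x := sub_pos.2 hxy
  have key := integral_image_eq_integral_abs_deriv_smul
    (measurableSet_Ioo (a := (0 : ℝ)) (b := 1))
    (fun u _ ↦ (((hasDerivAt_id' u).const_mul (y - x)).add_const x).hasDerivWithinAt)
    (((strictMono_id.const_mul hyx).add_const x).injective.injOn)
    (fun t : ℝ ↦ ((y - t : ℝ) : ℂ) ^ p * ((t - x : ℝ) : ℂ) ^ q)
  simp only [mul_one, image_affine_Ioo hyx, mul_zero, zero_add, sub_add_cancel] at key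
  rw [key, setIntegral_congr_fun measurableSet_Ioo
      (fun u hu ↦ sub_cpow_mul_sub_cpow_comp_affine hxy hu), integral_const_mul,
    ← integral_Ioc_eq_integral_Ioo, ← intervalIntegral.integral_of_le zero_le_one,
    ← Complex.betaIntegral, Complex.betaIntegral_eq_Gamma_mul_div _ _ (by simp; linarith)
      (by simp; linarith), mul_comm (Gamma (q + 1)), show q + 1 + (p + 1) = p + q + 2 by ring]

lemma integral_sub_cpow_mul_tsum_mul_sub_cpow (hp : -1 < p.re) (hq : -1 < q.re) (hxy : x < y)
    {c : ℕ → ℂ} (hc : Summable fun n ↦ ‖c n‖ * (y - x) ^ n) :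
    ∫ t in Ioo x y, ((y - t : ℝ) : ℂ) ^ p * (∑' n, c n * ((y - t : ℝ) : ℂ) ^ n) *
        ((t - x : ℝ) : ℂ) ^ q =
      ∑' n : ℕ, c n * (((y - x : ℝ) : ℂ) ^ (p + n + q + 1) *
        (Gamma (p + n + 1) * Gamma (q + 1) / Gamma (p + n + q + 2))) := by
  set f : ℕ → ℝ → ℂ := fun n t ↦ c n * (((y - t : ℝ) : ℂ) ^ (p + n) * ((t - x : ℝ) : ℂ) ^ q)
  have hpn (n : ℕ) : -1 < (p + n).re := by
    simp only [Complex.add_re, Complex.natCast_re]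
    linarith [n.cast_nonneg (α := ℝ)]
  have hf_int (n : ℕ) : IntegrableOn (f n) (Ioo x y) :=
    (integrableOn_sub_cpow_mul_sub_cpow (hpn n) hq hxy).const_mul _
  have hf_eq : ∀ t ∈ Ioo x y, ((y - t : ℝ) : ℂ) ^ p * (∑' n, c n * ((y - t : ℝ) : ℂ) ^ n) *
      ((t - x : ℝ) : ℂ) ^ q = ∑' n, f n t := by
    intro t ht
    have hyt : ((y - t : ℝ) : ℂ) ≠ 0 := Complex.ofReal_ne_zero.2 (sub_pos.2 ht.2).ne'
    rw [← tsum_mul_left, ← tsum_mul_right]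
    congr 1 with n
    simp only [f, Complex.cpow_add _ _ hyt, Complex.cpow_natCast]
    ring
  set C := ∫ t in Ioo x y, ‖((y - t : ℝ) : ℂ) ^ p * ((t - x : ℝ) : ℂ) ^ q‖
  have hf_norm (n : ℕ) : ∫ t in Ioo x y, ‖f n t‖ ≤ ‖c n‖ * (y - x) ^ n * C := by
    rw [← integral_const_mul]
    refine setIntegral_mono_on (hf_int n).norm
      ((integrableOn_sub_cpow_mul_sub_cpow hp hq hxy).norm.const_mul _) measurableSet_Ioo
      fun t ht ↦ ?_
    have hyt : 0 < y - t := sub_pos.2 ht.2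
    have hyt' : ((y - t : ℝ) : ℂ) ≠ 0 := Complex.ofReal_ne_zero.2 hyt.ne'
    simp only [f, Complex.cpow_add _ _ hyt', Complex.cpow_natCast, norm_mul, norm_pow,
      Complex.norm_real, Real.norm_of_nonneg hyt.le]
    have : (y - t) ^ n ≤ (y - x) ^ n := pow_le_pow_left₀ hyt.le (by linarith [ht.1]) n
    calc _ = ‖c n‖ * (‖((y - t : ℝ) : ℂ) ^ p‖ * ‖((t - x : ℝ) : ℂ) ^ q‖) * (y - t) ^ n := by ring
      _ ≤ ‖c n‖ * (‖((y - t : ℝ) : ℂ) ^ p‖ * ‖((t - x : ℝ) : ℂ) ^ q‖) * (y - x) ^ n := by gcongr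
      _ = _ := by ring
  have hsummable : Summable fun n ↦ ∫ t in Ioo x y, ‖f n t‖ :=
    (hc.mul_right C).of_nonneg_of_le (fun n ↦ integral_nonneg fun t ↦ norm_nonneg _) hf_norm
  rw [setIntegral_congr_fun measurableSet_Ioo hf_eq,
    ← integral_tsum_of_summable_integral_norm hf_int hsummable]
  congr 1 with n
  rw [integral_const_mul, integral_sub_cpow_mul_sub_cpow (hpn n) hq hxy]

end Beta

lemma integral_one_sub_cpow_mul_regularizedGaussHGFun_mul_sub_cpow (a b : ℂ) {μ lam : ℂ}
    (hμ : -1 < μ.re) (hlam : -1 < lam.re) {x : ℝ} (hx₀ : -1 < x) (hx₁ : x < 1) :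
    ∫ t in Ioo x 1, ((1 - t : ℝ) : ℂ) ^ μ *
        regularizedGaussHGFun a b (μ + 1) (((1 - t) / 2 : ℝ) : ℂ) * ((t - x : ℝ) : ℂ) ^ lam =
      Gamma (lam + 1) * ((1 - x : ℝ) : ℂ) ^ (μ + lam + 1) *
        regularizedGaussHGFun a b (μ + lam + 2) (((1 - x) / 2 : ℝ) : ℂ) := by
  set c := (regularizedGaussHGFunSeries a b (μ + 1)).coeff
  have hF (t : ℝ) : regularizedGaussHGFun a b (μ + 1) (((1 - t) / 2 : ℝ) : ℂ) =
      ∑' n, c n / 2 ^ n * ((1 - t : ℝ) : ℂ) ^ n := by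
    rw [Complex.regularizedGaussHGFun_eq_tsum]
    congr 1 with n
    rw [Complex.ofReal_div, div_pow, Complex.ofReal_ofNat]
    ring
  have hc : Summable fun n ↦ ‖c n / 2 ^ n‖ * (1 - x) ^ n := by
    have := Complex.summable_norm_coeff_regularizedGaussHGFunSeries_mul_pow a b (μ + 1)
      (r := (1 - x) / 2) (by linarith) (by linarith)
    convert this using 2 with n
    rw [norm_div, norm_pow, Complex.norm_two, div_pow]
    ring
  simp_rw [hF]
  rw [integral_sub_cpow_mul_tsum_mul_sub_cpow hμ hlam hx₁ hc,
    Complex.regularizedGaussHGFun_eq_tsum, ← tsum_mul_left]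
  congr 1 with n
  have hre (w : ℂ) (hw : -1 < w.re) : 0 < (w + n + 1).re := by
    simp only [Complex.add_re, Complex.natCast_re, Complex.one_re]
    linarith [n.cast_nonneg (α := ℝ)]
  have h₁ := Complex.Gamma_ne_zero_of_re_pos (hre μ hμ)
  have h₂ := Complex.Gamma_ne_zero_of_re_pos (hre (μ + lam + 1) (by simp; linarith))
  have hx : ((1 - x : ℝ) : ℂ) ≠ 0 := Complex.ofReal_ne_zero.2 (by linarith)
  simp only [c, Complex.coeff_regularizedGaussHGFunSeries]
  rw [show μ + n + lam + 1 = μ + lam + 1 + n by ring, Complex.cpow_add _ _ hx,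
    Complex.cpow_natCast, show μ + 1 + n = μ + n + 1 by ring,
    show μ + lam + 2 + n = μ + lam + 1 + n + 1 by ring,
    show μ + n + lam + 2 = μ + lam + 1 + n + 1 by ring, Complex.ofReal_div, div_pow,
    Complex.ofReal_ofNat]
  field_simp

theorem stmt5 (α : ℝ) (ν μ lam : ℂ) (hμ : -1 < μ.re) (hlam : -1 < lam.re) :
    ferrersP ν (-μ - lam - 1) (Real.tanh α) * ((Real.cosh α : ℝ) : ℂ) ^ (-μ - lam - 1) =
      (1 / Complex.Gamma (lam + 1)) *
        ∫ s in Set.Ioi α,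
          ((Real.cosh s : ℝ) : ℂ) ^ (-μ - 2) * ferrersP ν (-μ) (Real.tanh s) *
            ((Real.tanh s - Real.tanh α : ℝ) : ℂ) ^ lam := by
  have hΓ : Gamma (lam + 1) ≠ 0 := Complex.Gamma_ne_zero_of_re_pos (by simp; linarith)
  have hintegrand (s : ℝ) :
      ((Real.cosh s : ℝ) : ℂ) ^ (-μ - 2) * ferrersP ν (-μ) (Real.tanh s) *
          ((Real.tanh s - Real.tanh α : ℝ) : ℂ) ^ lam =
        (1 - Real.tanh s ^ 2) • (((1 - Real.tanh s : ℝ) : ℂ) ^ μ *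
          regularizedGaussHGFun (-ν) (ν + 1) (μ + 1) (((1 - Real.tanh s) / 2 : ℝ) : ℂ) *
            ((Real.tanh s - Real.tanh α : ℝ) : ℂ) ^ lam) := by
    rw [Real.cosh_cpow_sub_two, Complex.real_smul, ← ferrersP_neg_tanh_mul_cosh_cpow]
    ring
  simp_rw [hintegrand]
  rw [Real.integral_comp_tanh_Ioi α (fun t ↦ ((1 - t : ℝ) : ℂ) ^ μ *
      regularizedGaussHGFun (-ν) (ν + 1) (μ + 1) (((1 - t) / 2 : ℝ) : ℂ) *
        ((t - Real.tanh α : ℝ) : ℂ) ^ lam),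
    integral_one_sub_cpow_mul_regularizedGaussHGFun_mul_sub_cpow _ _ hμ hlam
      (Real.neg_one_lt_tanh α) (Real.tanh_lt_one α),
    show -μ - lam - 1 = -(μ + lam + 1) by ring, ferrersP_neg_tanh_mul_cosh_cpow,
    show μ + lam + 1 + 1 = μ + lam + 2 by ring]
  field_simp
end

section
/- Let λ ∈ ℂ, let z ∈ ℝ with -1/√2 < z < 1, and let t ∈ ℂ with |t| < 1. Then (1 + z·√(1-t))^{-λ} = ∑_{n=0}^∞ (𝔄_n^{(λ)}(z) / (2^n n!)) · t^n, where the coefficients are given by the absolutely convergent series 𝔄_n^{(λ)}(z) = 2^n ∑_{j=0}^∞ ((-1)^{j+n} (λ)_j Γ(j/2 + 1) / (Γ(j/2 - n + 1) · j!)) z^j; here √(1-t) and the power w^{-λ} are principal branches (and 1 + z√(1-t) ≠ 0 under these hypotheses). -/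
open Nat

theorem pochC_ofReal (b : ℝ) (n : ℕ) : pochC b n = ((ascPochhammer ℝ n).eval b : ℝ) := by
  rw [pochC, ascPochhammer_eval₂ Complex.ofRealHom]
  exact Polynomial.eval₂_at_apply Complex.ofRealHom b

theorem ascPochhammer_eval_nonneg (n : ℕ) {s : ℝ} (hs : 0 ≤ s) :
    0 ≤ (ascPochhammer ℝ n).eval s := by
  rcases hs.eq_or_lt with rfl | hs
  · cases n <;> simp
  · exact (ascPochhammer_pos n s hs).le

theorem norm_pochC_le (a : ℂ) (n : ℕ) : ‖pochC a n‖ ≤ (ascPochhammer ℝ n).eval ‖a‖ := by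
  induction n with
  | zero => simp [pochC]
  | succ n ih =>
    rw [pochC, ascPochhammer_succ_eval, ascPochhammer_succ_eval, norm_mul]
    gcongr
    · exact ascPochhammer_eval_nonneg n (norm_nonneg a)
    · exact ih
    · exact (norm_add_le _ _).trans (by simp)

theorem hasSum_pochC_div_factorial_mul_pow (a : ℂ) {x : ℂ} (hx : ‖x‖ < 1) :
    HasSum (fun n => pochC a n / n ! * x ^ n) ((1 - x) ^ (-a)) := by
  have hx' : -x ∈ Metric.eball (0 : ℂ) 1 := by
    rw [Metric.mem_eball, edist_zero_right, enorm_neg, ← ofReal_norm, ENNReal.ofReal_lt_one]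
    exact hx
  have h := Complex.one_add_cpow_hasFPowerSeriesOnBall_zero (a := -a) |>.hasSum hx'
  simp only [binomialSeries_apply, List.ofFn_const, List.prod_replicate, zero_sub,
    ← sub_eq_add_neg, smul_eq_mul] at h
  refine h.congr_fun fun n => ?_
  have hneg := ascPochhammer_eval_neg_eq_descPochhammer (R := ℂ) (-a) n
  rw [neg_neg] at hneg
  rw [Ring.choose_eq_smul, ← Polynomial.aeval_eq_smeval, Polynomial.aeval_def,
    ← Polynomial.eval_map, descPochhammer_map, pochC, hneg, smul_eq_mul, neg_pow]
  ring

theorem hasSum_ascPochhammer_div_factorial_mul_pow (b : ℝ) {r : ℝ} (hr0 : 0 ≤ r) (hr : r < 1) :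
    HasSum (fun n => (ascPochhammer ℝ n).eval b / n ! * r ^ n) ((1 - r) ^ (-b)) := by
  have h := hasSum_pochC_div_factorial_mul_pow b (x := r) (by simpa [abs_of_nonneg hr0])
  rw [← Complex.hasSum_ofReal, Complex.ofReal_cpow (by linarith)]
  push_cast
  simpa [pochC_ofReal] using h

/-- Unlike `Γ(x+1) = x Γ(x)`, this form has no exceptional points, thanks to `1/Γ` vanishing at
the poles. -/
theorem descPochhammer_eval_mul_inv_Gamma (x : ℂ) (n : ℕ) :
    (descPochhammer ℂ n).eval x * (Complex.Gamma (x + 1))⁻¹ =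
      (Complex.Gamma (x - n + 1))⁻¹ := by
  induction n with
  | zero => simp
  | succ n ih =>
    rw [descPochhammer_succ_eval, mul_right_comm, ih,
      Complex.one_div_Gamma_eq_self_mul_one_div_Gamma_add_one (x - (n + 1 : ℕ) + 1)]
    push_cast
    ring_nf

theorem pochC_neg_eq_Gamma_div (x : ℂ) (hx : Complex.Gamma (x + 1) ≠ 0) (n : ℕ) :
    pochC (-x) n = (-1) ^ n * Complex.Gamma (x + 1) / Complex.Gamma (x - n + 1) := by
  rw [pochC, ascPochhammer_eval_neg_eq_descPochhammer, mul_div_assoc, div_eq_mul_inv,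
    ← descPochhammer_eval_mul_inv_Gamma x n]
  field_simp

/-- The coefficient of `t ^ n` in the `j`-th term `(λ)ⱼ/j! (-z)^j (1-t)^(j/2)` of the binomial
expansion of `(1 + z √(1-t))^(-λ)`. -/
noncomputable def expansionCoeff (lam z : ℂ) (j n : ℕ) : ℂ :=
  pochC lam j / j ! * (-z) ^ j * (pochC (-((j : ℂ) / 2)) n / n !)

theorem Gamma_term_eq_expansionCoeff_mul_factorial (lam z : ℂ) (j n : ℕ) :
    (-1 : ℂ) ^ (j + n) * pochC lam j * Complex.Gamma ((j : ℂ) / 2 + 1) /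
      (Complex.Gamma ((j : ℂ) / 2 - n + 1) * (j ! : ℂ)) * z ^ j =
      expansionCoeff lam z j n * n ! := by
  have hG : Complex.Gamma ((j : ℂ) / 2 + 1) ≠ 0 :=
    Complex.Gamma_ne_zero_of_re_pos (by simp; positivity)
  have hn : (n ! : ℂ) ≠ 0 := Nat.cast_ne_zero.2 (factorial_ne_zero n)
  rw [expansionCoeff, pochC_neg_eq_Gamma_div _ hG, neg_pow z, pow_add]
  field_simp

theorem summable_norm_expansionCoeff_mul_pow (lam z : ℂ) {r : ℝ} (hr0 : 0 ≤ r)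
    (hr : r < 1 - ‖z‖ ^ 2) :
    Summable (fun p : ℕ × ℕ => ‖expansionCoeff lam z p.1 p.2‖ * r ^ p.2) := by
  have hr1 : r < 1 := by linarith [sq_nonneg ‖z‖]
  have hq : ‖z‖ * (1 - r) ^ (-(1 / 2 : ℝ)) < 1 := by
    rw [Real.rpow_neg (by linarith), ← Real.sqrt_eq_rpow, ← div_eq_mul_inv,
      div_lt_one (by simp; linarith), Real.lt_sqrt (norm_nonneg z)]
    linarith
  set q := ‖z‖ * (1 - r) ^ (-(1 / 2 : ℝ))
  set v : ℕ × ℕ → ℝ := fun p => (ascPochhammer ℝ p.1).eval ‖lam‖ / p.1 ! * ‖z‖ ^ p.1 *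
    ((ascPochhammer ℝ p.2).eval (p.1 / 2 : ℝ) / p.2 ! * r ^ p.2)
  have hA (j : ℕ) : 0 ≤ (ascPochhammer ℝ j).eval ‖lam‖ :=
    ascPochhammer_eval_nonneg j (norm_nonneg lam)
  have hB (j n : ℕ) : 0 ≤ (ascPochhammer ℝ n).eval (j / 2 : ℝ) :=
    ascPochhammer_eval_nonneg n (by positivity)
  have hrow (j : ℕ) :
      HasSum (fun n => v (j, n)) ((ascPochhammer ℝ j).eval ‖lam‖ / j ! * q ^ j) := by
    have h := (hasSum_ascPochhammer_div_factorial_mul_pow (j / 2) hr0 hr1).mul_left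
      ((ascPochhammer ℝ j).eval ‖lam‖ / j ! * ‖z‖ ^ j)
    have e : ‖z‖ ^ j * (1 - r) ^ (-(j / 2 : ℝ)) = q ^ j := by
      rw [mul_pow, ← Real.rpow_mul_natCast (by linarith)]
      ring_nf
    rwa [mul_assoc, e] at h
  have hv : Summable v := by
    refine (summable_prod_of_nonneg fun p => ?_).2 ⟨fun j => (hrow j).summable, ?_⟩
    · have := hA p.1
      have := hB p.1 p.2
      positivity
    · exact (hasSum_ascPochhammer_div_factorial_mul_pow ‖lam‖ (by positivity) hq).summable.congr
        fun j => ((hrow j).tsum_eq).symm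
  refine hv.of_nonneg_of_le (fun p => by positivity) fun p => ?_
  have h1 := norm_pochC_le lam p.1
  have h2 := norm_pochC_le (-((p.1 : ℂ) / 2)) p.2
  rw [norm_neg, norm_div, Complex.norm_natCast, Complex.norm_two] at h2
  have := hA p.1
  simp only [expansionCoeff, norm_mul, norm_div, norm_pow, norm_neg, Complex.norm_natCast, v]
  rw [mul_assoc _ _ (r ^ _)]
  gcongr

theorem summable_norm_expansionCoeff (lam : ℂ) {z : ℂ} (hz : ‖z‖ < 1) (n : ℕ) :
    Summable (fun j => ‖expansionCoeff lam z j n‖) := by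
  have hr : 0 < (1 - ‖z‖ ^ 2) / 2 := by nlinarith [norm_nonneg z]
  have h := (summable_norm_expansionCoeff_mul_pow lam z hr.le (by linarith)).comp_injective
    (i := fun j => (j, n)) fun _ _ h => (Prod.ext_iff.1 h).1
  exact (summable_mul_right_iff (pow_ne_zero n hr.ne')).1 h

theorem norm_cpow_one_half (x : ℂ) : ‖x ^ (1 / 2 : ℂ)‖ = √‖x‖ := by
  rw [show (1 / 2 : ℂ) = ((1 / 2 : ℝ) : ℂ) by norm_num, Complex.norm_cpow_real,
    Real.sqrt_eq_rpow]

theorem norm_mul_cpow_one_half_lt_one {z τ : ℂ} (hτ : ‖τ‖ < 1 - ‖z‖ ^ 2) :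
    ‖z * (1 - τ) ^ (1 / 2 : ℂ)‖ < 1 := by
  have h : ‖1 - τ‖ ≤ 1 + ‖τ‖ := (norm_sub_le _ _).trans (by simp)
  rw [norm_mul, norm_cpow_one_half, ← Real.sqrt_sq (norm_nonneg z),
    ← Real.sqrt_mul (sq_nonneg _), Real.sqrt_lt' one_pos]
  nlinarith [norm_nonneg τ, norm_nonneg (1 - τ), sq_nonneg ‖z‖]

theorem hasSum_tsum_expansionCoeff_mul_pow (lam z τ : ℂ) (hτ : ‖τ‖ < 1 - ‖z‖ ^ 2) :
    HasSum (fun n => (∑' j, expansionCoeff lam z j n) * τ ^ n)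
      ((1 + z * (1 - τ) ^ (1 / 2 : ℂ)) ^ (-lam)) := by
  have hτ1 : ‖τ‖ < 1 := by linarith [sq_nonneg ‖z‖]
  set w := (1 - τ) ^ (1 / 2 : ℂ)
  set u : ℕ × ℕ → ℂ := fun p => expansionCoeff lam z p.1 p.2 * τ ^ p.2
  have hu : Summable fun p => ‖u p‖ := by
    simpa only [u, norm_mul, norm_pow] using
      summable_norm_expansionCoeff_mul_pow lam z (norm_nonneg τ) hτ
  have hrow (j : ℕ) : HasSum (fun n => u (j, n)) (pochC lam j / j ! * (-z * w) ^ j) := by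
    have h := (hasSum_pochC_div_factorial_mul_pow (-((j : ℂ) / 2)) hτ1).mul_left
      (pochC lam j / j ! * (-z) ^ j)
    have hw : (1 - τ) ^ (-(-((j : ℂ) / 2))) = w ^ j := by
      rw [neg_neg, ← Complex.cpow_nat_mul]
      ring_nf
    rw [hw, mul_assoc, ← mul_pow] at h
    exact h.congr_fun fun n => by simp only [u, expansionCoeff]; ring
  have houter : HasSum (fun j => pochC lam j / j ! * (-z * w) ^ j) ((1 + z * w) ^ (-lam)) := by
    have h := hasSum_pochC_div_factorial_mul_pow lam (x := -z * w)
      (by rw [neg_mul, norm_neg]; exact norm_mul_cpow_one_half_lt_one hτ)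
    rwa [show 1 - -z * w = 1 + z * w by ring] at h
  have htot : HasSum u ((1 + z * w) ^ (-lam)) :=
    (houter.unique (hu.of_norm.hasSum.prod_fiberwise hrow)) ▸ hu.of_norm.hasSum
  have hcol (n : ℕ) :
      HasSum (fun j => u (j, n)) ((∑' j, expansionCoeff lam z j n) * τ ^ n) := by
    rw [← tsum_mul_right]
    exact (hu.comp_injective (i := fun j => (j, n))
      fun _ _ h => (Prod.ext_iff.1 h).1).of_norm.hasSum
  exact ((Equiv.prodComm ℕ ℕ).hasSum_iff.2 htot).prod_fiberwise hcol

theorem hasFPowerSeriesOnBall_ofScalars_of_hasSum {f : ℂ → ℂ} {a : ℕ → ℂ} {ρ : NNReal} (hρ : 0 < ρ)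
    (hloc : ∀ z : ℂ, ‖z‖ < ρ → HasSum (fun n => a n * z ^ n) (f z)) :
    HasFPowerSeriesOnBall f (FormalMultilinearSeries.ofScalars ℂ a) 0
      ((ρ / 2 : NNReal) : ENNReal) := by
  have hρ2 : ((ρ / 2 : NNReal) : ℝ) < ρ := by push_cast; linarith [NNReal.coe_pos.2 hρ]
  refine ⟨?_, by simpa using hρ.ne', fun {y} hy => ?_⟩
  · refine FormalMultilinearSeries.le_radius_of_tendsto _ (l := 0) ?_
    have h := (hloc (ρ / 2 : NNReal) (by simpa using hρ2)).summable.tendsto_atTop_zero.norm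
    simpa [FormalMultilinearSeries.ofScalars_norm] using h
  · rw [Metric.eball_coe, mem_ball_zero_iff] at hy
    simpa [FormalMultilinearSeries.ofScalars_apply_eq, mul_comm] using hloc y (hy.trans hρ2)

theorem hasSum_mul_pow_of_differentiableOn {f : ℂ → ℂ} {a : ℕ → ℂ} {ρ R : ℝ} (hρ : 0 < ρ)
    (hloc : ∀ z : ℂ, ‖z‖ < ρ → HasSum (fun n => a n * z ^ n) (f z))
    (hf : DifferentiableOn ℂ f (Metric.ball 0 R)) {z : ℂ} (hz : ‖z‖ < R) :
    HasSum (fun n => a n * z ^ n) (f z) := by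
  obtain ⟨R', hzR', hR'⟩ := exists_between hz
  lift R' to NNReal using (norm_nonneg z).trans hzR'.le
  lift ρ to NNReal using hρ.le
  have hcauchy := (hf.mono (Metric.closedBall_subset_ball hR')).hasFPowerSeriesOnBall
    ((norm_nonneg z).trans_lt hzR')
  have hp := hasFPowerSeriesOnBall_ofScalars_of_hasSum hρ hloc
  rw [← hp.hasFPowerSeriesAt.eq_formalMultilinearSeries hcauchy.hasFPowerSeriesAt] at hcauchy
  have h := hcauchy.hasSum (y := z) (by simpa [← ofReal_norm] using hzR')
  simpa [FormalMultilinearSeries.ofScalars_apply_eq, mul_comm] using h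

theorem re_cpow_one_half_pos {x : ℂ} (hx : x ∈ Complex.slitPlane) :
    0 < (x ^ (1 / 2 : ℂ)).re := by
  rw [Complex.cpow_def_of_ne_zero (Complex.slitPlane_ne_zero hx), Complex.exp_re]
  refine mul_pos (Real.exp_pos _) (Real.cos_pos_of_mem_Ioo ?_)
  have harg := (Complex.mem_slitPlane_iff_arg.1 hx).1
  have him : (Complex.log x * (1 / 2)).im = x.arg / 2 := by simp [Complex.log_im]; ring
  rw [him]
  constructor <;> linarith [Complex.neg_pi_lt_arg x, (Complex.arg_le_pi x).lt_of_ne harg]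

theorem one_add_ofReal_mul_mem_slitPlane {z : ℝ} (hz : -(1 / √2) ≤ z) {w : ℂ} (hw0 : 0 < w.re)
    (hw : ‖w‖ < √2) : 1 + z * w ∈ Complex.slitPlane := by
  rw [Complex.mem_slitPlane_iff]
  simp only [Complex.add_re, Complex.one_re, Complex.re_ofReal_mul, Complex.add_im,
    Complex.one_im, Complex.im_ofReal_mul, zero_add]
  rcases eq_or_ne (z * w.im) 0 with hzw | hzw
  · left
    rcases mul_eq_zero.1 hzw with rfl | hw_im
    · simp
    have hwre : w.re < √2 := by
      rwa [← Complex.re_add_im w, hw_im, Complex.ofReal_zero, zero_mul, add_zero,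
        Complex.norm_real, Real.norm_of_nonneg hw0.le] at hw
    have hs : 0 < √2 := by positivity
    have hzs : -1 ≤ z * √2 := by
      have := mul_le_mul_of_nonneg_right hz hs.le
      rwa [neg_mul, one_div, inv_mul_cancel₀ hs.ne'] at this
    rcases le_or_gt 0 z with h | h <;> nlinarith
  · exact Or.inr hzw

theorem differentiableOn_one_add_mul_cpow_one_half (lam : ℂ) {z : ℝ} (hz : -(1 / √2) ≤ z) :
    DifferentiableOn ℂ (fun τ : ℂ => (1 + z * (1 - τ) ^ (1 / 2 : ℂ)) ^ (-lam))
      (Metric.ball 0 1) := by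
  intro τ hτ
  rw [mem_ball_zero_iff] at hτ
  have hslit : 1 - τ ∈ Complex.slitPlane := by
    simpa [sub_eq_add_neg] using
      Complex.mem_slitPlane_of_norm_lt_one (z := -τ) (by simpa using hτ)
  have hnorm : ‖(1 - τ) ^ (1 / 2 : ℂ)‖ < √2 := by
    rw [norm_cpow_one_half]
    exact Real.sqrt_lt_sqrt (norm_nonneg _) ((norm_sub_le _ _).trans_lt (by simp; linarith))
  refine DifferentiableAt.differentiableWithinAt (DifferentiableAt.cpow_const ?_
    (one_add_ofReal_mul_mem_slitPlane hz (re_cpow_one_half_pos hslit) hnorm))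
  exact ((differentiableAt_id.const_sub 1).cpow_const hslit).const_mul _ |>.const_add 1

theorem stmt17 (lam : ℂ) (z : ℝ) (hz1 : -(1 / Real.sqrt 2) < z) (hz2 : z < 1)
    (t : ℂ) (ht : ‖t‖ < 1) :
    (∀ n : ℕ, Summable (fun j : ℕ => ‖(-1 : ℂ) ^ (j + n) * pochC lam j *
        Complex.Gamma ((j : ℂ) / 2 + 1) /
        (Complex.Gamma ((j : ℂ) / 2 - n + 1) * (j.factorial : ℂ)) * (z : ℂ) ^ j‖)) ∧
      HasSum
        (fun n : ℕ =>
          ((2 : ℂ) ^ n * ∑' j : ℕ, (-1 : ℂ) ^ (j + n) * pochC lam j *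
              Complex.Gamma ((j : ℂ) / 2 + 1) /
              (Complex.Gamma ((j : ℂ) / 2 - n + 1) * (j.factorial : ℂ)) * (z : ℂ) ^ j) /
            ((2 : ℂ) ^ n * (n.factorial : ℂ)) * t ^ n)
        ((1 + (z : ℂ) * (1 - t) ^ (1 / 2 : ℂ)) ^ (-lam)) := by
  have hz : ‖(z : ℂ)‖ < 1 := by
    have : 1 / √2 ≤ 1 := by
      rw [div_le_one (by positivity), Real.one_le_sqrt]
      norm_num
    rw [Complex.norm_real, Real.norm_eq_abs, abs_lt]
    exact ⟨by linarith, hz2⟩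
  simp_rw [Gamma_term_eq_expansionCoeff_mul_factorial]
  refine ⟨fun n => ?_, ?_⟩
  · simpa only [norm_mul] using (summable_norm_expansionCoeff lam hz n).mul_right ‖(n ! : ℂ)‖
  · have hcoeff (n : ℕ) : (2 ^ n * ∑' j, expansionCoeff lam z j n * n !) / (2 ^ n * n !) =
        ∑' j, expansionCoeff lam z j n := by
      rw [tsum_mul_right, mul_div_mul_left _ _ (pow_ne_zero n two_ne_zero),
        mul_div_cancel_right₀ _ (Nat.cast_ne_zero.2 (factorial_ne_zero n))]
    simp_rw [hcoeff]
    exact hasSum_mul_pow_of_differentiableOn (by nlinarith [norm_nonneg (z : ℂ)])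
      (fun τ hτ => hasSum_tsum_expansionCoeff_mul_pow lam z τ hτ)
      (differentiableOn_one_add_mul_cpow_one_half lam hz1.le) ht
end
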